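/- arXiv:1211.6761 — 3 statements merged into one kernel-verified Lean document; each statement's English description precedes it below -/
import Mathlib

section
/- Let R = ℤ[x]/(x² − 2x, 2ⁿ x) for n ≥ 1. Then the ideal (x) of R generated by x is, as an abelian group, isomorphic to ℤ/2ⁿ, and R/(x) ≅ ℤ as rings. -/
/-!
Since `x² = 2x`, every multiple `p(x) · x` equals `p(2) · x`, so `k ↦ k · x` maps `ℤ` onto the
ideal `(x)`. Its kernel: if `k x = u (x² - 2x) + v 2ⁿ x` in `ℤ[x]`, cancelling `x` and evaluating
at `2` gives `k = 2ⁿ v(2)`. Both relations lie in `(x)`, so `R ⧸ (x) = ℤ[x] ⧸ (x) ≅ ℤ`.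
-/

/-- The ring `R = ℤ[x]/(x² − 2x, 2ⁿ x)`, the K-theory ring `K⁰(ℝP^{2n})`
with `x = 1 − [λ]`. -/
noncomputable abbrev KRing' (n : ℕ) : Type :=
  Polynomial ℤ ⧸ Ideal.span
    ({Polynomial.X ^ 2 - 2 * Polynomial.X, 2 ^ n * Polynomial.X} : Set (Polynomial ℤ))

/-- The class of `x` in `R = ℤ[x]/(x² − 2x, 2ⁿ x)`. -/
noncomputable def KRingX' (n : ℕ) : KRing' n :=
  Ideal.Quotient.mk _ Polynomial.X

open Polynomial Ideal

namespace Polynomial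

noncomputable def quotientSpanMkXRingEquiv {R : Type*} [CommRing R] (I : Ideal R[X])
    (hI : I ≤ span {X}) : (R[X] ⧸ I) ⧸ span {Ideal.Quotient.mk I X} ≃+* R :=
  (quotEquivOfEq (by rw [map_span, Set.image_singleton])).trans <|
    (DoubleQuot.quotQuotEquivQuotSup I (span {X})).trans <|
    (quotEquivOfEq (by rw [sup_eq_right.2 hI, map_zero, sub_zero])).trans
      (quotientSpanXSubCAlgEquiv (0 : R)).toRingEquiv

noncomputable def zmultiplesMkX (I : Ideal ℤ[X]) : ℤ →+ span {Ideal.Quotient.mk I X} :=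
  zmultiplesHom _ ⟨_, mem_span_singleton_self _⟩

section

variable {a : ℤ} {m : ℕ} {I : Ideal ℤ[X]} (hI : I = span {X ^ 2 - C a * X, C (m : ℤ) * X})
include hI

theorem le_span_X_of_eq_span : I ≤ span {X} := by
  rw [hI, span_le]
  rintro p (rfl | rfl) <;> rw [SetLike.mem_coe, mem_span_singleton]
  exacts [⟨X - C a, by ring⟩, ⟨C (m : ℤ), by ring⟩]

theorem C_mul_X_mem_iff_dvd (k : ℤ) : C k * X ∈ I ↔ (m : ℤ) ∣ k := by
  rw [hI, mem_span_pair]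
  constructor
  · rintro ⟨u, v, huv⟩
    have hcancel : u * (X - C a) + v * C (m : ℤ) = C k :=
      mul_right_cancel₀ X_ne_zero (by rw [← huv]; ring)
    refine ⟨v.eval a, ?_⟩
    simpa [mul_comm] using (congrArg (eval a) hcancel).symm
  · rintro ⟨j, rfl⟩
    exact ⟨0, C j, by simp only [C_mul]; ring⟩

theorem mk_mul_mk_X (p : ℤ[X]) :
    Ideal.Quotient.mk I p * Ideal.Quotient.mk I X = p.eval a • Ideal.Quotient.mk I X := by
  obtain ⟨q, hq⟩ := X_sub_C_dvd_sub_C_eval (p := p) (a := a)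
  rw [← map_mul, ← map_zsmul, zsmul_eq_mul, ← C_eq_intCast, Int.cast_id, Ideal.Quotient.eq]
  have : p * X - C (p.eval a) * X = q * (X ^ 2 - C a * X) := by linear_combination X * hq
  rw [this, hI]
  exact mul_mem_left _ _ (subset_span (Or.inl rfl))

theorem zmultiplesMkX_surjective : Function.Surjective (zmultiplesMkX I) := by
  rintro ⟨y, hy⟩
  obtain ⟨r, rfl⟩ := mem_span_singleton'.1 hy
  obtain ⟨p, rfl⟩ := Ideal.Quotient.mk_surjective r
  exact ⟨p.eval a, Subtype.ext (mk_mul_mk_X hI p).symm⟩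

theorem zmultiplesMkX_ker : (zmultiplesMkX I).ker = AddSubgroup.zmultiples (m : ℤ) := by
  ext k
  rw [AddMonoidHom.mem_ker, Int.mem_zmultiples_iff, ← C_mul_X_mem_iff_dvd hI, Subtype.ext_iff,
    ← Ideal.Quotient.eq_zero_iff_mem, map_mul, eq_intCast C, map_intCast, ← zsmul_eq_mul]
  rfl

noncomputable def spanMkXAddEquivZMod : span {Ideal.Quotient.mk I X} ≃+ ZMod m :=
  (QuotientAddGroup.quotientKerEquivOfSurjective _ (zmultiplesMkX_surjective hI)).symm.trans <|
    (QuotientAddGroup.quotientAddEquivOfEq (zmultiplesMkX_ker hI)).trans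
      (Int.quotientZMultiplesNatEquivZMod m)

end

end Polynomial

theorem stmt10_general (n : ℕ) :
    Nonempty (↥(Ideal.span {KRingX' n} : Ideal (KRing' n)) ≃+ ZMod (2 ^ n)) ∧
    Nonempty ((KRing' n ⧸ Ideal.span {KRingX' n}) ≃+* ℤ) := by
  have hI : span {X ^ 2 - 2 * X, 2 ^ n * X} =
      span {X ^ 2 - C 2 * X, C ((2 ^ n : ℕ) : ℤ) * X} := by
    simp
  exact ⟨⟨spanMkXAddEquivZMod hI⟩, ⟨quotientSpanMkXRingEquiv _ (le_span_X_of_eq_span hI)⟩⟩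

/-- Let `R = ℤ[x]/(x² − 2x, 2ⁿ x)` for `n ≥ 1`.  Then the ideal `(x)` of `R`
is, as an abelian group, isomorphic to `ℤ/2ⁿ`, and `R/(x) ≅ ℤ` as rings. -/
theorem stmt10 (n : ℕ) (hn : 1 ≤ n) :
    Nonempty (↥(Ideal.span {KRingX' n} : Ideal (KRing' n)) ≃+ ZMod (2 ^ n)) ∧
    Nonempty ((KRing' n ⧸ Ideal.span {KRingX' n}) ≃+* ℤ) :=
  stmt10_general n
end

section
/- Let Q be a self-adjoint operator on a Hilbert space H with discrete spectrum accumulating only at ±∞ (all spectral subspaces for bounded intervals are finite dimensional), and let P be an orthogonal projection that is the identity on the spectral subspace H^{(R,∞)} and zero on H^{(−∞,−R)} for some R > 0. Set F = Q(1+Q²)^{−1/2}. Then the operator A = F − PFP − (1−P)F(1−P) has finite rank. -/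
/-!
Splitting `ℓ²(ι) = ran P ⊕ ran (1 - P)`, the operator `A` is the off-diagonal part
`P F (1 - P) + (1 - P) F P` of the diagonal operator `F`. Self-adjointness of `P` turns
`P e_i = e_i` (for `μ i > R`) and `P e_i = 0` (for `μ i < -R`) into the statement that the `i`-th
coordinate of `P g` is `g i`, resp. `0`, for every `g`; on such a coordinate one of `P`, `1 - P`
acts as the identity and the other as zero, so both off-diagonal terms vanish there. Hence `A`
takes values in the functions supported on the finite set `{i | |μ i| ≤ R}`.
-/

open scoped ENNReal

section

variable {ι 𝕜 : Type*}

theorem sub_mul_mul_sub_compl_mul_mul_compl {R : Type*} [Ring R] (P D : R) :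
    D - P * D * P - (1 - P) * D * (1 - P) = P * D * (1 - P) + (1 - P) * D * P := by
  noncomm_ring

namespace lp

theorem finiteDimensional_of_support_subset [NormedField 𝕜] {p : ℝ≥0∞}
    (V : Submodule 𝕜 (lp (fun _ : ι => 𝕜) p)) {s : Set ι} (hs : s.Finite)
    (hV : ∀ x ∈ V, ∀ i ∉ s, x i = 0) : FiniteDimensional 𝕜 V := by
  have : Finite s := hs
  let restrict : V →ₗ[𝕜] (s → 𝕜) :=
    (LinearMap.pi fun j : s => lp.evalₗ (fun _ : ι => 𝕜) p j) ∘ₗ V.subtype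
  refine FiniteDimensional.of_injective restrict fun x y hxy => ?_
  ext i
  by_cases hi : i ∈ s
  · exact congrFun hxy ⟨i, hi⟩
  · rw [hV x x.2 i hi, hV y y.2 i hi]

variable [RCLike 𝕜]

local notation "ℓ²" => lp (fun _ : ι => 𝕜) 2

theorem apply_eq_mul_of_isSelfAdjoint [DecidableEq ι] {P : ℓ² →L[𝕜] ℓ²}
    (hP : IsSelfAdjoint P) {i : ι} {c : ℝ} (hi : P (lp.single 2 i 1) = (c : 𝕜) • lp.single 2 i 1)
    (g : ℓ²) : P g i = c * g i := by
  have h := hP.isSymmetric (lp.single 2 i 1) g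
  simp only [ContinuousLinearMap.coe_coe] at h
  rw [hi, inner_smul_left, lp.inner_single_left, lp.inner_single_left] at h
  simpa using h.symm

theorem mul_mul_add_mul_mul_apply_eq_zero {P Q D : ℓ² →L[𝕜] ℓ²} {i : ι} {d : 𝕜}
    (hP : ∀ g, P g i = g i) (hQ : ∀ g, Q g i = 0) (hD : ∀ g, D g i = d * g i) (f : ℓ²) :
    (P * D * Q + Q * D * P) f i = 0 := by
  simp [hP, hQ, hD]

end lp

end

theorem stmt15_general {ι : Type*} (μ : ι → ℝ)
    (hdisc : ∀ a b : ℝ, {i : ι | a < μ i ∧ μ i < b}.Finite)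
    (R : ℝ)
    (Fop P : lp (fun _ : ι => ℂ) 2 →L[ℂ] lp (fun _ : ι => ℂ) 2)
    (hF : ∀ (f : lp (fun _ : ι => ℂ) 2) (i : ι),
      Fop f i = ((μ i / Real.sqrt (1 + (μ i) ^ 2) : ℝ) : ℂ) * f i)
    (hPsa : IsSelfAdjoint P)
    (hPone : ∀ f : lp (fun _ : ι => ℂ) 2, (∀ i, μ i ≤ R → f i = 0) → P f = f)
    (hPzero : ∀ f : lp (fun _ : ι => ℂ) 2, (∀ i, -R ≤ μ i → f i = 0) → P f = 0) :
    FiniteDimensional ℂ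
      ↥(LinearMap.range (Fop - P * Fop * P - (1 - P) * Fop * (1 - P)).toLinearMap) := by
  classical
  have single_vanishes {p : ℝ → Prop} {i : ι} (hi : ¬ p (μ i)) (j : ι) (hj : p (μ j)) :
      (lp.single 2 i 1 : lp (fun _ : ι => ℂ) 2) j = 0 :=
    lp.single_apply_ne 2 i 1 fun h => hi (h ▸ hj)
  have hP_high {i} (hi : R < μ i) (g) : P g i = g i := by
    simpa using lp.apply_eq_mul_of_isSelfAdjoint hPsa (c := 1)
      (by simpa using hPone _ (single_vanishes (p := (· ≤ R)) hi.not_ge)) g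
  have hP_low {i} (hi : μ i < -R) (g) : P g i = 0 := by
    simpa using lp.apply_eq_mul_of_isSelfAdjoint hPsa (c := 0)
      (by simpa using hPzero _ (single_vanishes (p := (-R ≤ ·)) hi.not_ge)) g
  refine lp.finiteDimensional_of_support_subset _ (hdisc (-R - 1) (R + 1)) ?_
  rintro _ ⟨f, rfl⟩ i hi
  rw [ContinuousLinearMap.coe_coe, sub_mul_mul_sub_compl_mul_mul_compl]
  have hF_diag (g) := hF g i
  by_cases hhigh : R < μ i
  · have hP_compl (g) : (1 - P) g i = 0 := by simp [hP_high hhigh]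
    exact lp.mul_mul_add_mul_mul_apply_eq_zero (hP_high hhigh) hP_compl hF_diag f
  · have hlow : μ i < -R := by
      by_contra hlow
      exact hi ⟨by linarith, by linarith⟩
    have hP_compl (g) : (1 - P) g i = g i := by simp [hP_low hlow]
    rw [add_comm]
    exact lp.mul_mul_add_mul_mul_apply_eq_zero hP_compl (hP_low hlow) hF_diag f

/-- Let `Q` be a self-adjoint operator with discrete spectrum accumulating
only at `±∞`, diagonalized in an orthonormal eigenbasis indexed by `ι` with eigenvalues
`μ : ι → ℝ` (so all spectral subspaces for bounded intervals are finite dimensional), acting on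
`H = ℓ²(ι)`.  Let `F = Q(1+Q²)^{−1/2}` (the diagonal operator with entries
`μ i / √(1 + μ i²)`), and let `P` be an orthogonal projection that is the identity on the
spectral subspace `H^{(R,∞)}` and zero on `H^{(−∞,−R)}` for some `R > 0`.  Then
`A = F − PFP − (1−P)F(1−P)` has finite rank. -/
theorem stmt15 {ι : Type*} (μ : ι → ℝ)
    (hdisc : ∀ a b : ℝ, {i : ι | a < μ i ∧ μ i < b}.Finite)
    (R : ℝ) (hR : 0 < R)
    (Fop P : lp (fun _ : ι => ℂ) 2 →L[ℂ] lp (fun _ : ι => ℂ) 2)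
    (hF : ∀ (f : lp (fun _ : ι => ℂ) 2) (i : ι),
      Fop f i = ((μ i / Real.sqrt (1 + (μ i) ^ 2) : ℝ) : ℂ) * f i)
    (hPsa : IsSelfAdjoint P) (hPidem : P * P = P)
    (hPone : ∀ f : lp (fun _ : ι => ℂ) 2, (∀ i, μ i ≤ R → f i = 0) → P f = f)
    (hPzero : ∀ f : lp (fun _ : ι => ℂ) 2, (∀ i, -R ≤ μ i → f i = 0) → P f = 0) :
    FiniteDimensional ℂ
      ↥(LinearMap.range (Fop - P * Fop * P - (1 - P) * Fop * (1 - P)).toLinearMap) :=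
  stmt15_general μ hdisc R Fop P hF hPsa hPone hPzero
end

section
/- Let Q be a self-adjoint operator on a Hilbert space H with compact resolvent (so (1+Q²)^{−1/2} is compact), P an orthogonal projection (with no further assumption), and for r ∈ ℝ define F̃(r) = P·(Q+r)(1+Q²)^{−1/2}·P + (1−P)·(Q−r)(1+Q²)^{−1/2}·(1−P). If P is the identity on the spectral subspace H^{(R,∞)} of Q and zero on H^{(−∞,−R)}, then for r > R + 1 the operator F̃(r) is invertible, with P F̃(r) P strictly positive on im(P) and (1−P) F̃(r) (1−P) strictly negative on im(1−P). -/
lemma stmt16_scalar {R r x : ℝ} (hR : 0 < R) (hr : R + 1 < r) (hx : -R ≤ x) :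
    1 / Real.sqrt (1 + R ^ 2) ≤ (x + r) / Real.sqrt (1 + x ^ 2) := by
  have hb : 0 < Real.sqrt (1 + R ^ 2) := Real.sqrt_pos.2 (by positivity)
  have ha : 0 < Real.sqrt (1 + x ^ 2) := Real.sqrt_pos.2 (by positivity)
  have hb1 : 1 ≤ Real.sqrt (1 + R ^ 2) := by
    nlinarith [Real.sq_sqrt (show (0:ℝ) ≤ 1 + R ^ 2 by positivity), hb]
  rw [div_le_div_iff₀ hb ha]
  rcases le_or_gt 0 x with h | h
  · have hax : Real.sqrt (1 + x ^ 2) ≤ x + 1 := by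
      rw [show x + 1 = Real.sqrt ((x + 1) ^ 2) from (Real.sqrt_sq (by linarith)).symm]
      exact Real.sqrt_le_sqrt (by nlinarith)
    nlinarith [mul_nonneg (by linarith : (0:ℝ) ≤ x + r)
      (by linarith : (0:ℝ) ≤ Real.sqrt (1 + R ^ 2) - 1)]
  · have hab : Real.sqrt (1 + x ^ 2) ≤ Real.sqrt (1 + R ^ 2) :=
      Real.sqrt_le_sqrt (by nlinarith)
    nlinarith [mul_nonneg (by linarith : (0:ℝ) ≤ x + r - 1)
      (by linarith : (0:ℝ) ≤ Real.sqrt (1 + R ^ 2))]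

lemma stmt16_scalar_neg {R r x : ℝ} (hR : 0 < R) (hr : R + 1 < r) (hx : x ≤ R) :
    (x + -r) / Real.sqrt (1 + x ^ 2) ≤ -(1 / Real.sqrt (1 + R ^ 2)) := by
  have h := stmt16_scalar hR hr (x := -x) (by linarith)
  rw [show 1 + (-x) ^ 2 = 1 + x ^ 2 by ring] at h
  have : (x + -r) / Real.sqrt (1 + x ^ 2) = -((-x + r) / Real.sqrt (1 + x ^ 2)) := by
    ring
  rw [this]
  linarith


set_option maxHeartbeats 1000000 in
/-- Let `Q` be a self-adjoint operator with compact resolvent, diagonalized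
in an orthonormal eigenbasis indexed by `ι` with eigenvalues `μ : ι → ℝ` (discrete spectrum,
finite-dimensional spectral subspaces for bounded intervals), acting on `H = ℓ²(ι)`.  For
`r ∈ ℝ` let `Fr r = (Q + r)(1 + Q²)^{−1/2}` (the diagonal operator with entries
`(μ i + r)/√(1 + μ i²)`) and set
`F̃(r) = P·(Q+r)(1+Q²)^{−1/2}·P + (1−P)·(Q−r)(1+Q²)^{−1/2}·(1−P)`.
If the orthogonal projection `P` is the identity on the spectral subspace `H^{(R,∞)}` of `Q`
and zero on `H^{(−∞,−R)}`, then for `r > R + 1` the operator `F̃(r)` is invertible, with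
`P F̃(r) P` strictly positive on `im P` and `(1−P) F̃(r) (1−P)` strictly negative on
`im (1−P)`. -/
theorem stmt16 {ι : Type*} (μ : ι → ℝ)
    (hdisc : ∀ a b : ℝ, {i : ι | a < μ i ∧ μ i < b}.Finite)
    (R : ℝ) (hR : 0 < R)
    (Fr : ℝ → (lp (fun _ : ι => ℂ) 2 →L[ℂ] lp (fun _ : ι => ℂ) 2))
    (hFr : ∀ (r : ℝ) (f : lp (fun _ : ι => ℂ) 2) (i : ι),
      Fr r f i = (((μ i + r) / Real.sqrt (1 + (μ i) ^ 2) : ℝ) : ℂ) * f i)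
    (P : lp (fun _ : ι => ℂ) 2 →L[ℂ] lp (fun _ : ι => ℂ) 2)
    (hPsa : IsSelfAdjoint P) (hPidem : P * P = P)
    (hPone : ∀ f : lp (fun _ : ι => ℂ) 2, (∀ i, μ i ≤ R → f i = 0) → P f = f)
    (hPzero : ∀ f : lp (fun _ : ι => ℂ) 2, (∀ i, -R ≤ μ i → f i = 0) → P f = 0)
    (r : ℝ) (hr : R + 1 < r) :
    IsUnit (P * Fr r * P + (1 - P) * Fr (-r) * (1 - P)) ∧
    (∃ c > (0 : ℝ), ∀ v ∈ Set.range (⇑P),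
      c * ‖v‖ ^ 2 ≤
        (inner ℂ ((P * Fr r * P + (1 - P) * Fr (-r) * (1 - P)) v) v : ℂ).re) ∧
    (∃ c > (0 : ℝ), ∀ v ∈ Set.range (⇑((1 : lp (fun _ : ι => ℂ) 2 →L[ℂ] lp (fun _ : ι => ℂ) 2) - P)),
      (inner ℂ ((P * Fr r * P + (1 - P) * Fr (-r) * (1 - P)) v) v : ℂ).re ≤
        -(c * ‖v‖ ^ 2)) := by
  classical
  set c : ℝ := 1 / Real.sqrt (1 + R ^ 2) with hcdef
  have hc : 0 < c := by
    have : 0 < Real.sqrt (1 + R ^ 2) := Real.sqrt_pos.2 (by positivity)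
    positivity
  set T := P * Fr r * P + (1 - P) * Fr (-r) * (1 - P) with hT
  -- basic facts about P
  have hPP : ∀ v, P (P v) = P v := fun v => by
    rw [← ContinuousLinearMap.mul_apply, hPidem]
  have h1mP : ∀ x : lp (fun _ : ι => ℂ) 2, (1 - P) x = x - P x := fun x => by
    rw [ContinuousLinearMap.sub_apply, ContinuousLinearMap.one_apply]
  have hsym : ∀ x y : lp (fun _ : ι => ℂ) 2, (inner ℂ (P x) y : ℂ) = inner ℂ x (P y) :=
    fun x y => ContinuousLinearMap.isSelfAdjoint_iff_isSymmetric.mp hPsa x y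
  have hsym1 : ∀ x y : lp (fun _ : ι => ℂ) 2,
      (inner ℂ ((1 - P) x) y : ℂ) = inner ℂ x ((1 - P) y) := by
    intro x y
    rw [h1mP, h1mP, inner_sub_left, inner_sub_right, hsym]
  -- support of elements of ran P and ran (1-P)
  have hsuppP : ∀ v : lp (fun _ : ι => ℂ) 2, P v = v → ∀ i, μ i < -R → v i = 0 := by
    intro v hv i hi
    have he : P (lp.single 2 i (1:ℂ)) = 0 := by
      refine hPzero _ fun j hj => ?_
      rcases eq_or_ne j i with rfl | hne
      · linarith
      · exact lp.single_apply_ne 2 i _ hne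
    have h2 : (inner ℂ (lp.single 2 i (1:ℂ)) v : ℂ) = v i := by
      rw [lp.inner_single_left]
      simp [RCLike.inner_apply]
    rw [← h2]
    conv_lhs => rw [← hv]
    rw [← hsym, he, inner_zero_left]
  have hsuppQ : ∀ v : lp (fun _ : ι => ℂ) 2, P v = 0 → ∀ i, R < μ i → v i = 0 := by
    intro v hv i hi
    have he : P (lp.single 2 i (1:ℂ)) = lp.single 2 i (1:ℂ) := by
      refine hPone _ fun j hj => ?_
      rcases eq_or_ne j i with rfl | hne
      · linarith
      · exact lp.single_apply_ne 2 i _ hne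
    have h2 : (inner ℂ (lp.single 2 i (1:ℂ)) v : ℂ) = v i := by
      rw [lp.inner_single_left]
      simp [RCLike.inner_apply]
    rw [← h2, ← he, hsym, hv, inner_zero_right]
  -- diagonal sums
  have hdiag : ∀ (s : ℝ) (f : lp (fun _ : ι => ℂ) 2),
      HasSum (fun i => (μ i + s) / Real.sqrt (1 + μ i ^ 2) * ‖f i‖ ^ 2)
        ((inner ℂ (Fr s f) f : ℂ)).re := by
    intro s f
    have h := (lp.hasSum_inner (𝕜 := ℂ) (Fr s f) f).mapL Complex.reCLM
    have h3 : ∀ i, Complex.reCLM (inner ℂ ((Fr s f) i) (f i) : ℂ)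
        = (μ i + s) / Real.sqrt (1 + μ i ^ 2) * ‖f i‖ ^ 2 := by
      intro i
      rw [Complex.reCLM_apply, hFr s f i, RCLike.inner_apply]
      simp [map_mul, Complex.conj_ofReal, mul_assoc, RCLike.conj_mul,
        ← Complex.ofReal_pow, ← Complex.ofReal_mul]
      rw [← Complex.normSq_eq_norm_sq, Complex.normSq_apply]
      ring
    rw [show (fun i => (μ i + s) / Real.sqrt (1 + μ i ^ 2) * ‖f i‖ ^ 2)
        = fun i => Complex.reCLM (inner ℂ ((Fr s f) i) (f i) : ℂ) from
      funext fun i => (h3 i).symm]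
    exact h
  have hnormsq : ∀ f : lp (fun _ : ι => ℂ) 2, HasSum (fun i => ‖f i‖ ^ 2) (‖f‖ ^ 2) := by
    intro f
    have h := (lp.hasSum_inner (𝕜 := ℂ) f f).mapL Complex.reCLM
    have h3 : ∀ i, Complex.reCLM (inner ℂ (f i) (f i) : ℂ) = ‖f i‖ ^ 2 := fun i =>
      inner_self_eq_norm_sq (𝕜 := ℂ) (f i)
    rw [show (fun i => ‖f i‖ ^ 2) = fun i => Complex.reCLM (inner ℂ (f i) (f i) : ℂ) from
      funext fun i => (h3 i).symm]
    have h4 : Complex.reCLM (inner ℂ f f : ℂ) = ‖f‖ ^ 2 := inner_self_eq_norm_sq (𝕜 := ℂ) f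
    rw [← h4]
    exact h
  -- quadratic estimates
  have hposQ : ∀ v : lp (fun _ : ι => ℂ) 2, P v = v →
      c * ‖v‖ ^ 2 ≤ ((inner ℂ (Fr r v) v : ℂ)).re := by
    intro v hv
    refine hasSum_le ?_ ((hnormsq v).mul_left c) (hdiag r v)
    intro i
    rcases lt_or_ge (μ i) (-R) with h | h
    · rw [hsuppP v hv i h]
      simp
    · exact mul_le_mul_of_nonneg_right (stmt16_scalar hR hr h) (sq_nonneg _)
  have hnegQ : ∀ v : lp (fun _ : ι => ℂ) 2, P v = 0 →
      ((inner ℂ (Fr (-r) v) v : ℂ)).re ≤ -(c * ‖v‖ ^ 2) := by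
    intro v hv
    refine hasSum_le ?_ (hdiag (-r) v) (((hnormsq v).mul_left c).neg)
    intro i
    rcases le_or_gt (μ i) R with h | h
    · have h2 := mul_le_mul_of_nonneg_right (stmt16_scalar_neg hR hr h) (sq_nonneg ‖v i‖)
      rw [hcdef]
      linarith [h2]
    · rw [hsuppQ v hv i h]
      simp
  -- Fr is symmetric
  have hFrsym : ∀ (s : ℝ) (x y : lp (fun _ : ι => ℂ) 2),
      (inner ℂ (Fr s x) y : ℂ) = inner ℂ x (Fr s y) := by
    intro s x y
    rw [lp.inner_eq_tsum, lp.inner_eq_tsum]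
    refine tsum_congr fun i => ?_
    rw [hFr, hFr, RCLike.inner_apply, RCLike.inner_apply, map_mul, Complex.conj_ofReal]
    ring
  have hTapp : ∀ v : lp (fun _ : ι => ℂ) 2,
      T v = P (Fr r (P v)) + (1 - P) (Fr (-r) (v - P v)) := by
    intro v
    simp only [hT, ContinuousLinearMap.add_apply, ContinuousLinearMap.mul_apply,
      ContinuousLinearMap.sub_apply, ContinuousLinearMap.one_apply]
  have hTsymm : ∀ x y : lp (fun _ : ι => ℂ) 2, (inner ℂ (T x) y : ℂ) = inner ℂ x (T y) := by
    intro x y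
    rw [hTapp, hTapp, inner_add_left, inner_add_right]
    congr 1
    · rw [hsym, hFrsym, hsym]
    · have e1 : (inner ℂ ((1 - P) (Fr (-r) (x - P x))) y : ℂ)
          = inner ℂ (Fr (-r) (x - P x)) (y - P y) := by
        rw [hsym1, h1mP]
      have e2 : (inner ℂ x ((1 - P) (Fr (-r) (y - P y))) : ℂ)
          = inner ℂ (x - P x) (Fr (-r) (y - P y)) := by
        rw [← hsym1, h1mP]
      rw [e1, e2, hFrsym]
  -- the master estimate
  have hkey : ∀ v : lp (fun _ : ι => ℂ) 2,
      c * ‖v‖ ^ 2 ≤ ((inner ℂ (T v) (P v - (v - P v)) : ℂ)).re := by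
    intro v
    have hPu : P (P v) = P v := hPP v
    have hPz : P (v - P v) = 0 := by rw [map_sub, hPP, sub_self]
    have huz : (inner ℂ (P v) (v - P v) : ℂ) = 0 := by
      rw [hsym, hPz, inner_zero_right]
    have e1 : (inner ℂ (P (Fr r (P v))) (P v) : ℂ) = inner ℂ (Fr r (P v)) (P v) := by
      rw [hsym, hPu]
    have e2 : (inner ℂ (P (Fr r (P v))) (v - P v) : ℂ) = 0 := by
      rw [hsym, hPz, inner_zero_right]
    have e3 : (inner ℂ ((1 - P) (Fr (-r) (v - P v))) (P v) : ℂ) = 0 := by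
      rw [hsym1, h1mP, hPu, sub_self, inner_zero_right]
    have e4 : (inner ℂ ((1 - P) (Fr (-r) (v - P v))) (v - P v) : ℂ)
        = inner ℂ (Fr (-r) (v - P v)) (v - P v) := by
      rw [hsym1, h1mP, hPz, sub_zero]
    have hsplit : (inner ℂ (T v) (P v - (v - P v)) : ℂ)
        = inner ℂ (T v) (P v) - inner ℂ (T v) (v - P v) := inner_sub_right _ _ _
    have hsum : (inner ℂ (T v) (P v - (v - P v)) : ℂ)
        = inner ℂ (Fr r (P v)) (P v) - inner ℂ (Fr (-r) (v - P v)) (v - P v) := by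
      rw [hsplit, hTapp, inner_add_left, inner_add_left, e1, e2, e3, e4]
      ring
    have hnv : ‖v‖ ^ 2 = ‖P v‖ ^ 2 + ‖v - P v‖ ^ 2 := by
      have hv' : v = P v + (v - P v) := by abel
      have h5 := congrArg (fun t : lp (fun _ : ι => ℂ) 2 => ‖t‖ ^ 2) hv'
      rw [h5, norm_add_sq (𝕜 := ℂ), huz]
      simp
    have hp := hposQ (P v) hPu
    have hn := hnegQ (v - P v) hPz
    have hre : ((inner ℂ (T v) (P v - (v - P v)) : ℂ)).re
        = ((inner ℂ (Fr r (P v)) (P v) : ℂ)).re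
          - ((inner ℂ (Fr (-r) (v - P v)) (v - P v) : ℂ)).re := by
      rw [hsum, Complex.sub_re]
    rw [hre, hnv]
    linarith
  -- norm of the test vector
  have hwn : ∀ v : lp (fun _ : ι => ℂ) 2, ‖P v - (v - P v)‖ = ‖v‖ := by
    intro v
    have hPz : P (v - P v) = 0 := by rw [map_sub, hPP, sub_self]
    have huz : (inner ℂ (P v) (v - P v) : ℂ) = 0 := by
      rw [hsym, hPz, inner_zero_right]
    have h1 : ‖P v - (v - P v)‖ ^ 2 = ‖P v‖ ^ 2 + ‖v - P v‖ ^ 2 := by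
      rw [norm_sub_sq (𝕜 := ℂ), huz]
      simp
    have h2 : ‖v‖ ^ 2 = ‖P v‖ ^ 2 + ‖v - P v‖ ^ 2 := by
      have hv' : v = P v + (v - P v) := by abel
      have h5 := congrArg (fun t : lp (fun _ : ι => ℂ) 2 => ‖t‖ ^ 2) hv'
      rw [h5, norm_add_sq (𝕜 := ℂ), huz]
      simp
    rw [← Real.sqrt_sq (norm_nonneg (P v - (v - P v))), ← Real.sqrt_sq (norm_nonneg v),
      h1, h2]
  -- lower bound for T
  have hlower : ∀ v : lp (fun _ : ι => ℂ) 2, c * ‖v‖ ≤ ‖T v‖ := by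
    intro v
    have h1 := hkey v
    have h2 : ((inner ℂ (T v) (P v - (v - P v)) : ℂ)).re ≤ ‖T v‖ * ‖v‖ := by
      calc ((inner ℂ (T v) (P v - (v - P v)) : ℂ)).re
          ≤ ‖(inner ℂ (T v) (P v - (v - P v)) : ℂ)‖ := Complex.re_le_norm _
        _ = ‖(inner ℂ (T v) (P v - (v - P v)) : ℂ)‖ := rfl
        _ ≤ ‖T v‖ * ‖P v - (v - P v)‖ := norm_inner_le_norm _ _
        _ = ‖T v‖ * ‖v‖ := by rw [hwn]
    rcases eq_or_lt_of_le (norm_nonneg v) with h0 | h0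
    · rw [← h0, mul_zero]
      exact norm_nonneg _
    · refine le_of_mul_le_mul_right ?_ h0
      calc c * ‖v‖ * ‖v‖ = c * ‖v‖ ^ 2 := by ring
        _ ≤ ((inner ℂ (T v) (P v - (v - P v)) : ℂ)).re := h1
        _ ≤ ‖T v‖ * ‖v‖ := h2
  -- injectivity
  have hinj : Function.Injective T := by
    intro a b hab
    have h := hlower (a - b)
    rw [map_sub, hab, sub_self, norm_zero] at h
    have h' : ‖a - b‖ ≤ 0 := by nlinarith
    rw [← sub_eq_zero]
    exact norm_le_zero_iff.mp h'
  have hker : LinearMap.ker (T : lp (fun _ : ι => ℂ) 2 →ₗ[ℂ] lp (fun _ : ι => ℂ) 2) = ⊥ := LinearMap.ker_eq_bot_of_injective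
    (f := (T : lp (fun _ : ι => ℂ) 2 →ₗ[ℂ] lp (fun _ : ι => ℂ) 2)) hinj
  -- antilipschitz and closed range
  have hanti : AntilipschitzWith (Real.toNNReal c⁻¹) T := by
    refine ContinuousLinearMap.antilipschitz_of_bound T fun x => ?_
    rw [Real.coe_toNNReal _ (by positivity)]
    have h := hlower x
    calc ‖x‖ = c⁻¹ * (c * ‖x‖) := by field_simp
      _ ≤ c⁻¹ * ‖T x‖ := by
          exact mul_le_mul_of_nonneg_left h (by positivity)
  have hclosed : IsClosed (Set.range T) := hanti.isClosed_range T.uniformContinuous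
  have hKclosed : IsClosed ((LinearMap.range (T : lp (fun _ : ι => ℂ) 2 →ₗ[ℂ] lp (fun _ : ι => ℂ) 2) : Submodule ℂ (lp (fun _ : ι => ℂ) 2)) :
      Set (lp (fun _ : ι => ℂ) 2)) := by
    rw [LinearMap.coe_range]
    exact hclosed
  haveI : CompleteSpace (LinearMap.range (T : lp (fun _ : ι => ℂ) 2 →ₗ[ℂ] lp (fun _ : ι => ℂ) 2)) := hKclosed.completeSpace_coe
  have horth : (LinearMap.range (T : lp (fun _ : ι => ℂ) 2 →ₗ[ℂ] lp (fun _ : ι => ℂ) 2))ᗮ = ⊥ := by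
    rw [Submodule.eq_bot_iff]
    intro u hu
    have h0 : ∀ x, (inner ℂ (T x) u : ℂ) = 0 := fun x =>
      (Submodule.mem_orthogonal _ u).mp hu _ (LinearMap.mem_range_self _ x)
    have hTu : (inner ℂ (T u) (P u - (u - P u)) : ℂ) = 0 := by
      rw [hTsymm, ← inner_conj_symm, h0, map_zero]
    have h1 := hkey u
    rw [hTu] at h1
    simp only [Complex.zero_re] at h1
    have h4 : ‖u‖ ^ 2 ≤ 0 :=
      le_of_not_gt fun hpos => absurd h1 (not_le.mpr (mul_pos hc hpos))
    have h5 : ‖u‖ ^ 2 = 0 := le_antisymm h4 (sq_nonneg _)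
    exact norm_eq_zero.mp ((pow_eq_zero_iff (by norm_num : (2:ℕ) ≠ 0)).mp h5)
  have hrange : LinearMap.range (T : lp (fun _ : ι => ℂ) 2 →ₗ[ℂ] lp (fun _ : ι => ℂ) 2) = ⊤ := Submodule.orthogonal_eq_bot_iff.mp horth
  have hunit : IsUnit T := by
    let e := ContinuousLinearEquiv.ofBijective T hker hrange
    refine ⟨⟨T, (e.symm : lp (fun _ : ι => ℂ) 2 →L[ℂ] lp (fun _ : ι => ℂ) 2), ?_, ?_⟩, rfl⟩
    · refine ContinuousLinearMap.ext fun x => ?_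
      simp only [ContinuousLinearMap.mul_apply, ContinuousLinearMap.one_apply,
        ContinuousLinearEquiv.coe_coe]
      exact e.apply_symm_apply x
    · refine ContinuousLinearMap.ext fun x => ?_
      simp only [ContinuousLinearMap.mul_apply, ContinuousLinearMap.one_apply,
        ContinuousLinearEquiv.coe_coe]
      exact e.symm_apply_apply x
  refine ⟨hunit, ⟨c, hc, ?_⟩, ⟨c, hc, ?_⟩⟩
  · rintro v ⟨w, rfl⟩
    have hv : P (P w) = P w := hPP w
    have hTv : (inner ℂ (T (P w)) (P w) : ℂ) = inner ℂ (Fr r (P w)) (P w) := by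
      rw [hTapp, hv, sub_self]
      simp only [map_zero, add_zero]
      rw [hsym, hv]
    rw [hTv]
    exact hposQ (P w) hv
  · rintro v ⟨w, rfl⟩
    have hz0 : ((1 : lp (fun _ : ι => ℂ) 2 →L[ℂ] lp (fun _ : ι => ℂ) 2) - P) w
        = w - P w := h1mP w
    rw [hz0]
    have hPz : P (w - P w) = 0 := by rw [map_sub, hPP, sub_self]
    have hTv : (inner ℂ (T (w - P w)) (w - P w) : ℂ)
        = inner ℂ (Fr (-r) (w - P w)) (w - P w) := by
      rw [hTapp, hPz]
      simp only [map_zero, zero_add, sub_zero]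
      rw [hsym1, h1mP, hPz, sub_zero]
    rw [hTv]
    exact hnegQ (w - P w) hPz
end
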